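/- Let N be an embedded polygon with n unit sides z_0,…,z_{n-1} (edges [z_j,z_{j+1}], indices mod n) and weights a_{[z_j,z_{j+1}]} ∈ ℝ\{0}. Then the map Λ = (D F_{(Id,a)}, D L_{Id}) has rank 3n - 2 if and only if A := ∑_j (Re(z_{j+1}-z_j)/a_{[z_j,z_{j+1}]})(z_{j+1}-z_j) and B := ∑_j (Im(z_{j+1}-z_j)/a_{[z_j,z_{j+1}]})(z_{j+1}-z_j) are ℝ-linearly independent in ℂ. -/

import Mathlib

/-- Differential of the force contribution of a single unit edge with direction
`d` (`|d| = 1`), weight `w`, weight perturbation `wdot`, and relative vertex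
perturbation `dPhi`. -/
noncomputable def dForce (w wdot : ℝ) (d dPhi : ℂ) : ℂ :=
  (wdot : ℂ) * d +
    (w : ℂ) * (dPhi - d * ((((starRingEnd ℂ d) * dPhi).re : ℝ) : ℂ))

/-!
Write `d_j = z (j+1) - z j` and `δ_j = Ψ (j+1) - Ψ j`. The length constraints say `δ_j ⊥ d_j`;
given them, the balance equation at `z j` says that the edge force `ȧ_j d_j + a_j δ_j` takes the
same value `c` on every edge. Projecting onto `d_j` and `i d_j` gives back `ȧ_j = Re (d̄_j c)` and
`δ_j = i (Im (d̄_j c) / a_j) d_j`, so infinitesimal motions are a choice of `c` plus a translation,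
subject only to the closing condition `∑ δ_j = 0`, which reads `Im c • A - Re c • B = 0`.
The motions are all translations iff this forces `c = 0`, i.e. iff `A` and `B` are independent.
-/

open Complex ComplexConjugate

namespace ZMod

variable {n : ℕ} [NeZero n]

theorem sum_range_natCast {M : Type*} [AddCommMonoid M] (g : ZMod n → M) :
    ∑ k ∈ Finset.range n, g k = ∑ j, g j :=
  Finset.sum_nbij' (↑) val (fun _ _ => Finset.mem_univ _)
    (fun j _ => Finset.mem_range.mpr j.val_lt)
    (fun _ hk => val_cast_of_lt (Finset.mem_range.mp hk))
    (fun j _ => natCast_zmod_val j) (fun _ _ => rfl)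

theorem eq_apply_zero_of_forall_add_one {X : Type*} {f : ZMod n → X}
    (h : ∀ j, f (j + 1) = f j) (j : ZMod n) : f j = f 0 := by
  have hnat : ∀ k : ℕ, f k = f 0 := by
    intro k
    induction k with
    | zero => simp
    | succ k ih => rw [Nat.cast_succ, h, ih]
  rw [← natCast_zmod_val j, hnat]

theorem exists_sub_eq_iff_sum_eq_zero {M : Type*} [AddCommGroup M] (g : ZMod n → M) :
    (∃ Ψ : ZMod n → M, ∀ j, Ψ (j + 1) - Ψ j = g j) ↔ ∑ j, g j = 0 := by
  constructor
  · rintro ⟨Ψ, hΨ⟩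
    rw [← Finset.sum_congr rfl fun j _ => hΨ j, Finset.sum_sub_distrib,
      Fintype.sum_equiv (Equiv.addRight 1) (fun j => Ψ (j + 1)) Ψ fun _ => rfl, sub_self]
  · intro hg
    refine ⟨fun j => ∑ k ∈ Finset.range j.val, g k, fun j => ?_⟩
    by_cases hj : j.val + 1 < n
    · have hval : (j + 1).val = j.val + 1 := by
        rw [val_add, val_one_eq_one_mod, Nat.one_mod_eq_one.mpr (by omega), Nat.mod_eq_of_lt hj]
      simp only [hval, Finset.sum_range_succ, natCast_zmod_val, add_sub_cancel_left]
    · have hjn : j.val + 1 = n := by have := j.val_lt; omega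
      have hj1 : j + 1 = 0 := by
        rw [← natCast_zmod_val j, ← Nat.cast_add_one, hjn, natCast_self]
      have hsum : ∑ k ∈ Finset.range (j.val + 1), g k = 0 := by rw [hjn, sum_range_natCast, hg]
      rw [Finset.sum_range_succ, natCast_zmod_val] at hsum
      simp only [hj1, val_zero, Finset.range_zero, Finset.sum_empty, zero_sub]
      exact neg_eq_of_add_eq_zero_right hsum

end ZMod

theorem dForce_neg_neg (w wdot : ℝ) (d δ : ℂ) :
    dForce w wdot (-d) (-δ) = -dForce w wdot d δ := by
  simp only [dForce, map_neg, neg_mul_neg]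
  ring

theorem dForce_of_re_conj_mul_eq_zero (w wdot : ℝ) {d δ : ℂ} (h : (conj d * δ).re = 0) :
    dForce w wdot d δ = wdot * d + w * δ := by
  simp [dForce, h]

theorem conj_mul_self_of_norm_eq_one {d : ℂ} (hd : ‖d‖ = 1) : conj d * d = 1 := by
  simp [conj_mul', hd]

theorem edge_balance_iff {w wdot : ℝ} {d δ c : ℂ} (hd : ‖d‖ = 1) (hw : w ≠ 0) :
    ((conj d * δ).re = 0 ∧ wdot * d + w * δ = c) ↔
      (wdot = (conj d * c).re ∧ δ = I * ((conj d * c).im / w : ℝ) * d) := by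
  have hdd := conj_mul_self_of_norm_eq_one hd
  constructor
  · rintro ⟨hre, rfl⟩
    have hc : conj d * (wdot * d + w * δ) = wdot + w * (conj d * δ) := by
      linear_combination wdot * hdd
    have hperp : conj d * δ = I * (conj d * δ).im := by
      apply Complex.ext <;> simp [hre]
    have hδ : δ = d * (conj d * δ) := by linear_combination -δ * hdd
    rw [hc]
    generalize conj d * δ = x at hre hperp hδ
    refine ⟨by simp [hre], ?_⟩
    simp only [add_im, ofReal_im, mul_im, ofReal_re, hre, mul_zero, zero_add, add_zero]
    rw [mul_div_cancel_left₀ _ hw, hδ]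
    linear_combination d * hperp
  · rintro ⟨rfl, rfl⟩
    set r : ℝ := (conj d * c).im / w
    have hwr : (w : ℂ) * r = (conj d * c).im := by exact_mod_cast mul_div_cancel₀ _ hw
    constructor
    · have : conj d * (I * r * d) = I * r := by linear_combination I * r * hdd
      rw [this]
      simp
    · calc ((conj d * c).re : ℂ) * d + w * (I * r * d)
          = d * ((conj d * c).re + (conj d * c).im * I) := by rw [← hwr]; ring
        _ = c := by rw [re_add_im]; linear_combination c * hdd

theorem sum_im_conj_mul_div_mul {ι : Type*} [Fintype ι] (d : ι → ℂ) (a : ι → ℝ) (c : ℂ) :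
    ∑ j, (((conj (d j) * c).im / a j : ℝ) : ℂ) * d j =
      c.im • ∑ j, (((d j).re / a j : ℝ) : ℂ) * d j
        - c.re • ∑ j, (((d j).im / a j : ℝ) : ℂ) * d j := by
  simp only [Finset.smul_sum, ← Finset.sum_sub_distrib, real_smul]
  refine Finset.sum_congr rfl fun j _ => ?_
  simp only [mul_im, conj_re, conj_im]
  push_cast
  ring

theorem polygon_kernel_iff {n : ℕ} [NeZero n] {z : ZMod n → ℂ} {a : ZMod n → ℝ}
    (hunit : ∀ j, ‖z (j + 1) - z j‖ = 1) (ha : ∀ j, a j ≠ 0)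
    (Ψ : ZMod n → ℂ) (adot : ZMod n → ℝ) :
    ((∀ j, dForce (a j) (adot j) (z (j + 1) - z j) (Ψ (j + 1) - Ψ j)
          + dForce (a (j - 1)) (adot (j - 1)) (z (j - 1) - z j) (Ψ (j - 1) - Ψ j) = 0) ∧
      ∀ j, (conj (z j - z (j + 1)) * (Ψ j - Ψ (j + 1))).re = 0) ↔
      ∃ c : ℂ, ∀ j, adot j = (conj (z (j + 1) - z j) * c).re ∧
        Ψ (j + 1) - Ψ j = I * ((conj (z (j + 1) - z j) * c).im / a j : ℝ) * (z (j + 1) - z j) := by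
  have hlen : ∀ j, (conj (z j - z (j + 1)) * (Ψ j - Ψ (j + 1))).re
      = (conj (z (j + 1) - z j) * (Ψ (j + 1) - Ψ j)).re := fun j => by
    rw [← neg_sub (z (j + 1)), ← neg_sub (Ψ (j + 1)), map_neg, neg_mul_neg]
  obtain ⟨E, hE⟩ : ∃ E : ZMod n → ℂ,
      ∀ j, adot j * (z (j + 1) - z j) + a j * (Ψ (j + 1) - Ψ j) = E j := ⟨_, fun _ => rfl⟩
  have hforce (hperp : ∀ j, (conj (z (j + 1) - z j) * (Ψ (j + 1) - Ψ j)).re = 0) (j : ZMod n) :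
      dForce (a j) (adot j) (z (j + 1) - z j) (Ψ (j + 1) - Ψ j)
          + dForce (a (j - 1)) (adot (j - 1)) (z (j - 1) - z j) (Ψ (j - 1) - Ψ j) = 0 ↔
        E j = E (j - 1) := by
    have hprev (f : ZMod n → ℂ) : f (j - 1) - f j = -(f (j - 1 + 1) - f (j - 1)) := by
      rw [sub_add_cancel, neg_sub]
    rw [hprev z, hprev Ψ, dForce_neg_neg, dForce_of_re_conj_mul_eq_zero _ _ (hperp j),
      dForce_of_re_conj_mul_eq_zero _ _ (hperp (j - 1)), hE, hE, ← sub_eq_add_neg, sub_eq_zero]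
  constructor
  · rintro ⟨hF, hL⟩
    have hperp j := (hlen j).symm.trans (hL j)
    have hconst : ∀ j, E j = E 0 := ZMod.eq_apply_zero_of_forall_add_one fun j => by
      simpa using (hforce hperp (j + 1)).1 (hF (j + 1))
    exact ⟨E 0, fun j => (edge_balance_iff (hunit j) (ha j)).1 ⟨hperp j, (hE j).trans (hconst j)⟩⟩
  · rintro ⟨c, hc⟩
    have hedge j := (edge_balance_iff (hunit j) (ha j)).2 (hc j)
    refine ⟨fun j => (hforce (fun j => (hedge j).1) j).2 ?_, fun j => (hlen j).trans (hedge j).1⟩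
    rw [← hE, ← hE, (hedge j).2, (hedge (j - 1)).2]

theorem polygon_flexible_iff_general
    (n : ℕ) [NeZero n]
    (z : ZMod n → ℂ)
    (hunit : ∀ j : ZMod n, ‖z (j + 1) - z j‖ = 1)
    (a : ZMod n → ℝ) (ha : ∀ j, a j ≠ 0) :
    (∀ (Ψ : ZMod n → ℂ) (adot : ZMod n → ℝ),
      (∀ j : ZMod n,
        dForce (a j) (adot j) (z (j + 1) - z j) (Ψ (j + 1) - Ψ j)
          + dForce (a (j - 1)) (adot (j - 1)) (z (j - 1) - z j)
              (Ψ (j - 1) - Ψ j) = 0) →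
      (∀ j : ZMod n,
        ((starRingEnd ℂ (z j - z (j + 1))) * (Ψ j - Ψ (j + 1))).re = 0) →
      ((∃ e : ℂ, ∀ j, Ψ j = e) ∧ ∀ j, adot j = 0))
    ↔ LinearIndependent ℝ
        ![∑ j : ZMod n, ((((z (j + 1) - z j).re / a j : ℝ)) : ℂ) * (z (j + 1) - z j),
          ∑ j : ZMod n, ((((z (j + 1) - z j).im / a j : ℝ)) : ℂ) * (z (j + 1) - z j)] := by
  have hclosed (c : ℂ) :
      ∑ j, I * ((conj (z (j + 1) - z j) * c).im / a j : ℝ) * (z (j + 1) - z j) = 0 ↔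
        c.im • ∑ j : ZMod n, ((((z (j + 1) - z j).re / a j : ℝ)) : ℂ) * (z (j + 1) - z j)
          + (-c.re) • ∑ j : ZMod n, ((((z (j + 1) - z j).im / a j : ℝ)) : ℂ) * (z (j + 1) - z j)
          = 0 := by
    simp only [mul_assoc, ← Finset.mul_sum, sum_im_conj_mul_div_mul, mul_eq_zero, I_ne_zero,
      false_or, neg_smul, sub_eq_add_neg]
  rw [LinearIndependent.pair_iff]
  constructor
  · intro hker s t hst
    obtain ⟨Ψ, hΨ⟩ :=
      (ZMod.exists_sub_eq_iff_sum_eq_zero _).2 ((hclosed ⟨-t, s⟩).2 (by simpa using hst))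
    obtain ⟨hF, hL⟩ := (polygon_kernel_iff hunit ha Ψ _).2 ⟨⟨-t, s⟩, fun j => ⟨rfl, hΨ j⟩⟩
    obtain ⟨⟨e, he⟩, hadot⟩ := hker Ψ _ hF hL
    have hc := ((edge_balance_iff (hunit 0) (ha 0)).2 ⟨rfl, hΨ 0⟩).2
    rw [hadot 0, he, he] at hc
    have hc0 : (⟨-t, s⟩ : ℂ) = 0 := by rw [← hc]; simp
    simpa [Complex.ext_iff, and_comm] using hc0
  · intro hli Ψ adot hF hL
    obtain ⟨c, hc⟩ := (polygon_kernel_iff hunit ha Ψ adot).1 ⟨hF, hL⟩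
    obtain ⟨him, hre⟩ := hli _ _ <| (hclosed c).1 <|
      (ZMod.exists_sub_eq_iff_sum_eq_zero _).1 ⟨Ψ, fun j => (hc j).2⟩
    have hc0 : c = 0 := Complex.ext (neg_eq_zero.1 hre) him
    refine ⟨⟨Ψ 0, ZMod.eq_apply_zero_of_forall_add_one fun j => ?_⟩,
      fun j => by simp [(hc j).1, hc0]⟩
    exact sub_eq_zero.1 (by simp [(hc j).2, hc0])

/-- For an embedded polygon with `n` unit sides `z 0, …, z (n-1)` (edges
`[z j, z (j+1)]`, indices mod `n`) with nowhere-vanishing weights `a`, the map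
`Λ = (D F_{(Id,a)}, D L_{Id})` has rank `3n - 2` (i.e. its kernel is reduced to
the translations) if and only if
`A = ∑_j (Re(z_{j+1}-z_j)/a_j)(z_{j+1}-z_j)` and
`B = ∑_j (Im(z_{j+1}-z_j)/a_j)(z_{j+1}-z_j)` are `ℝ`-linearly independent. -/
theorem polygon_flexible_iff
    (n : ℕ) (hn : 3 ≤ n) [NeZero n]
    (z : ZMod n → ℂ) (hzinj : Function.Injective z)
    (hunit : ∀ j : ZMod n, ‖z (j + 1) - z j‖ = 1)
    (a : ZMod n → ℝ) (ha : ∀ j, a j ≠ 0) :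
    (∀ (Ψ : ZMod n → ℂ) (adot : ZMod n → ℝ),
      (∀ j : ZMod n,
        dForce (a j) (adot j) (z (j + 1) - z j) (Ψ (j + 1) - Ψ j)
          + dForce (a (j - 1)) (adot (j - 1)) (z (j - 1) - z j)
              (Ψ (j - 1) - Ψ j) = 0) →
      (∀ j : ZMod n,
        ((starRingEnd ℂ (z j - z (j + 1))) * (Ψ j - Ψ (j + 1))).re = 0) →
      ((∃ e : ℂ, ∀ j, Ψ j = e) ∧ ∀ j, adot j = 0))
    ↔ LinearIndependent ℝ
        ![∑ j : ZMod n, ((((z (j + 1) - z j).re / a j : ℝ)) : ℂ) * (z (j + 1) - z j),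
          ∑ j : ZMod n, ((((z (j + 1) - z j).im / a j : ℝ)) : ℂ) * (z (j + 1) - z j)] :=
  polygon_flexible_iff_general n z hunit a ha
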